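/- Let n ≥ 4, fix M ≥ 0 and R > 0, and define φ_R' : [0,∞) → ℝ by φ_R'(r) = M + (n−1)r/(2nR) for r ≤ R and φ_R'(r) = M + 1/2 − R^{n−1}/(2n·r^{n−1}) for r > R, and Φ(x) = ∫₀^{|x|} φ_R'(s) ds for x ∈ ℝⁿ. Then: (i) M ≤ φ_R'(r) ≤ M + 1/2 and φ_R' is continuous; (ii) for 0 < |x| < R, ΔΦ(x) = (n−1)/(2R) + M(n−1)/|x|, and for |x| > R, ΔΦ(x) = (2M+1)(n−1)/(2|x|); (iii) for 0 < |x| < R, Δ(ΔΦ)(x) = −M(n−1)(n−3)/|x|³, and for |x| > R, Δ(ΔΦ)(x) = −(M+1/2)(n−1)(n−3)/|x|³; in particular the bi-Laplacian of Φ is nonpositive away from the origin and the sphere {|x| = R}. -/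

import Mathlib

open MeasureTheory Metric Real Set

noncomputable section

abbrev Euc (n : ℕ) := EuclideanSpace ℝ (Fin n)

/-- Laplacian via iterated coordinate derivatives. -/
def lap {n : ℕ} (g : Euc n → ℝ) (x : Euc n) : ℝ :=
  ∑ j : Fin n, fderiv ℝ (fun y => fderiv ℝ g y (EuclideanSpace.single j 1)) x
    (EuclideanSpace.single j 1)

/-- Bi-Laplacian. -/
def bilap {n : ℕ} (g : Euc n → ℝ) (x : Euc n) : ℝ := lap (fun y => lap g y) x

/-- The derivative `φ_R'` of the higher-dimensional Morawetz multiplier (formula (3.26)). -/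
def phiD (n : ℕ) (M R r : ℝ) : ℝ :=
  if r ≤ R then M + ((n : ℝ) - 1) * r / (2 * n * R)
  else M + 1/2 - R ^ (n - 1) / (2 * n * r ^ (n - 1))

/-- The higher-dimensional Morawetz multiplier `Φ(x) = ∫₀^{|x|} φ_R'(s) ds`. -/
def Phi (n : ℕ) (M R : ℝ) (x : Euc n) : ℝ := ∫ s in (0 : ℝ)..‖x‖, phiD n M R s

/-!
For a radial function `Φ(x) = f(‖x‖)` one has `ΔΦ = f'' + (n - 1) f' / r` away from the
origin. The profile of `Φ` is a primitive of the continuous function `φ_R'`, so `ΔΦ` is read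
off from `φ_R'` and its derivative on either side of the sphere `‖x‖ = R`; on each side it
has the form `a + c / ‖x‖`, and `Δ (c / ‖x‖) = -c (n - 3) / ‖x‖³`.
-/

open Filter Topology

variable {n : ℕ}

theorem Filter.EventuallyEq.lap_eq {f g : Euc n → ℝ} {x : Euc n} (h : f =ᶠ[𝓝 x] g) :
    lap f x = lap g x := by
  refine Finset.sum_congr rfl fun j _ => ?_
  have hdir : (fun y => fderiv ℝ f y (EuclideanSpace.single j 1)) =ᶠ[𝓝 x]
      fun y => fderiv ℝ g y (EuclideanSpace.single j 1) := by
    filter_upwards [h.fderiv (𝕜 := ℝ)] with y hy using by rw [hy]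
  rw [hdir.fderiv_eq]

section InnerProductSpace

variable {F : Type*} [NormedAddCommGroup F] [InnerProductSpace ℝ F]

theorem hasFDerivAt_norm {x : F} (hx : x ≠ 0) :
    HasFDerivAt (fun y : F => ‖y‖) (‖x‖⁻¹ • innerSL ℝ x) x := by
  have := (hasStrictFDerivAt_norm_sq x).hasFDerivAt.sqrt (by positivity)
  simp only [Real.sqrt_sq (norm_nonneg _)] at this
  refine this.congr_fderiv ?_
  ext v
  simp only [one_div, mul_inv_rev, smul_apply, coe_innerSL_apply,
    nsmul_eq_mul, Nat.cast_ofNat, smul_eq_mul]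
  field_simp

theorem HasDerivAt.hasFDerivAt_comp_norm {g : ℝ → ℝ} {g' : ℝ} {x : F} (hx : x ≠ 0)
    (hg : HasDerivAt g g' ‖x‖) :
    HasFDerivAt (fun y : F => g ‖y‖) ((g' / ‖x‖) • innerSL ℝ x) x := by
  refine (hg.comp_hasFDerivAt x (hasFDerivAt_norm hx)).congr_fderiv ?_
  rw [smul_smul, div_eq_mul_inv]

end InnerProductSpace

theorem lap_comp_norm {f f' : ℝ → ℝ} {f'' : ℝ} {x : Euc n} (hx : x ≠ 0)
    (hf : ∀ᶠ r in 𝓝 ‖x‖, HasDerivAt f (f' r) r) (hf' : HasDerivAt f' f'' ‖x‖) :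
    lap (fun y => f ‖y‖) x = f'' + (n - 1) / ‖x‖ * f' ‖x‖ := by
  have hx0 : ‖x‖ ≠ 0 := norm_ne_zero_iff.2 hx
  have hquot :
      HasDerivAt (fun r => f' r / r) ((f'' * ‖x‖ - f' ‖x‖) / ‖x‖ ^ 2) ‖x‖ := by
    simpa using hf'.fun_div (hasDerivAt_id' _) hx0
  have hdir : ∀ j,
      (fun y => fderiv ℝ (fun y : Euc n => f ‖y‖) y (EuclideanSpace.single j 1))
        =ᶠ[𝓝 x] fun y => f' ‖y‖ / ‖y‖ * y j := by
    intro j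
    filter_upwards [eventually_ne_nhds hx, continuous_norm.continuousAt.eventually hf]
      with y hy hfy
    rw [(hfy.hasFDerivAt_comp_norm hy).fderiv]
    simp [EuclideanSpace.inner_single_right]
  have hsecond : ∀ j,
      fderiv ℝ (fun y : Euc n => f' ‖y‖ / ‖y‖ * y j) x (EuclideanSpace.single j 1)
        = (f'' * ‖x‖ - f' ‖x‖) / ‖x‖ ^ 3 * x j ^ 2 + f' ‖x‖ / ‖x‖ := by
    intro j
    have hprod := (hquot.hasFDerivAt_comp_norm hx).fun_mul
      (EuclideanSpace.proj (𝕜 := ℝ) j).hasFDerivAt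
    rw [HasFDerivAt.fderiv (f := fun y : Euc n => f' ‖y‖ / ‖y‖ * y j) hprod]
    simp only [PiLp.proj_apply, add_apply, smul_apply,
      PiLp.single_eq_same, smul_eq_mul, mul_one, coe_innerSL_apply,
      EuclideanSpace.inner_single_right, conj_trivial, one_mul]
    field_simp
    ring
  have hsum : ∑ j, x j ^ 2 = ‖x‖ ^ 2 := by
    simp [EuclideanSpace.norm_sq_eq]
  rw [lap, Finset.sum_congr rfl fun j _ => by rw [(hdir j).fderiv_eq, hsecond],
    Finset.sum_add_distrib, ← Finset.mul_sum, hsum]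
  simp only [Finset.sum_const, Finset.card_univ, Fintype.card_fin, nsmul_eq_mul]
  field_simp
  ring

theorem lap_const_add_div_norm (a c : ℝ) {x : Euc n} (hx : x ≠ 0) :
    lap (fun y : Euc n => a + c / ‖y‖) x = -(c * (n - 3)) / ‖x‖ ^ 3 := by
  have hx0 : ‖x‖ ≠ 0 := norm_ne_zero_iff.2 hx
  have hf : ∀ r ≠ (0 : ℝ), HasDerivAt (fun r => a + c / r) (-c / r ^ 2) r := fun r hr => by
    simpa [div_eq_mul_inv] using ((hasDerivAt_inv hr).const_mul c).const_add a
  have hf' : HasDerivAt (fun r : ℝ => -c / r ^ 2) (2 * c / ‖x‖ ^ 3) ‖x‖ := by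
    refine ((hasDerivAt_const _ (-c)).fun_div (hasDerivAt_pow 2 _)
      (pow_ne_zero 2 hx0)).congr_deriv ?_
    field_simp
    ring
  rw [lap_comp_norm hx ((eventually_ne_nhds hx0).mono hf) hf']
  field_simp
  ring

variable {M R : ℝ}

theorem phiD_mem_Icc (hn : n ≠ 0) (hR : 0 < R) {r : ℝ} (hr : 0 ≤ r) :
    phiD n M R r ∈ Icc M (M + 1 / 2) := by
  have hn1 : (1 : ℝ) ≤ n := by exact_mod_cast Nat.one_le_iff_ne_zero.2 hn
  unfold phiD
  split_ifs with hrR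
  · have h0 : 0 ≤ ((n : ℝ) - 1) * r / (2 * n * R) :=
      div_nonneg (mul_nonneg (sub_nonneg.2 hn1) hr) (by positivity)
    have h1 : ((n : ℝ) - 1) * r / (2 * n * R) ≤ 1 / 2 := by
      rw [div_le_iff₀ (by positivity)]
      nlinarith
    constructor <;> linarith
  · have hr0 : 0 < r := hR.trans (not_le.1 hrR)
    have h0 : 0 ≤ R ^ (n - 1) / (2 * n * r ^ (n - 1)) := by positivity
    have h1 : R ^ (n - 1) / (2 * n * r ^ (n - 1)) ≤ 1 / 2 := by
      rw [div_le_iff₀ (by positivity)]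
      nlinarith [pow_le_pow_left₀ hR.le (not_le.1 hrR).le (n - 1), pow_pos hr0 (n - 1)]
    constructor <;> linarith

theorem continuous_phiD (hn : n ≠ 0) (hR : 0 < R) : Continuous (phiD n M R) := by
  refine continuous_if_le continuous_id continuous_const (by fun_prop) ?_ ?_
  · refine continuousOn_const.sub (continuousOn_const.div (by fun_prop) fun r hr => ?_)
    have : 0 < r := hR.trans_le hr
    positivity
  · rintro r (rfl : r = R)
    field_simp
    ring

theorem hasDerivAt_phiD_of_lt {r : ℝ} (hr : r < R) :
    HasDerivAt (phiD n M R) ((n - 1) / (2 * n * R)) r := by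
  have hlin :
      HasDerivAt (fun s => M + ((n : ℝ) - 1) * s / (2 * n * R)) ((n - 1) / (2 * n * R)) r := by
    simpa using ((hasDerivAt_id r).const_mul ((n : ℝ) - 1)).div_const (2 * n * R) |>.const_add M
  refine hlin.congr_of_eventuallyEq ?_
  filter_upwards [eventually_le_nhds hr] with s hs
  simp [phiD, hs]

theorem hasDerivAt_phiD_of_gt (hn : n ≠ 0) (hR : 0 < R) {r : ℝ} (hr : R < r) :
    HasDerivAt (phiD n M R) ((n - 1) * R ^ (n - 1) / (2 * n * r ^ n)) r := by
  have hr0 : 0 < r := hR.trans hr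
  obtain ⟨k, rfl⟩ := Nat.exists_eq_add_one_of_ne_zero hn
  have hpow : HasDerivAt (fun s : ℝ => s ^ k) (k * r ^ k / r) r := by
    refine (hasDerivAt_pow k r).congr_deriv ?_
    rcases k with _ | k
    · simp
    · field_simp
      simp [pow_succ]
  have houter := ((hasDerivAt_const r (R ^ k)).fun_div (hpow.const_mul (2 * ((k + 1 : ℕ) : ℝ)))
    (by positivity)).const_sub (M + 1 / 2)
  refine (houter.congr_deriv ?_).congr_of_eventuallyEq ?_
  · simp only [Nat.cast_add, Nat.cast_one, zero_mul, zero_sub, add_sub_cancel_right,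
      add_tsub_cancel_right]
    field_simp
    ring
  · filter_upwards [eventually_gt_nhds hr] with s hs
    simp [phiD, not_le.2 hs]

theorem lap_Phi (hn : n ≠ 0) (hR : 0 < R) {x : Euc n} (hx : x ≠ 0) {d : ℝ}
    (hd : HasDerivAt (phiD n M R) d ‖x‖) :
    lap (Phi n M R) x = d + (n - 1) / ‖x‖ * phiD n M R ‖x‖ :=
  lap_comp_norm hx
    (.of_forall fun r => ((continuous_phiD hn hR).integral_hasStrictDerivAt 0 r).hasDerivAt) hd

theorem lap_Phi_of_lt (hn : n ≠ 0) (hR : 0 < R) {x : Euc n} (hx : x ≠ 0) (hxR : ‖x‖ < R) :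
    lap (Phi n M R) x = (n - 1) / (2 * R) + M * (n - 1) / ‖x‖ := by
  have hx0 : ‖x‖ ≠ 0 := norm_ne_zero_iff.2 hx
  rw [lap_Phi hn hR hx (hasDerivAt_phiD_of_lt hxR), phiD, if_pos hxR.le]
  field_simp
  ring

theorem lap_Phi_of_gt (hn : n ≠ 0) (hR : 0 < R) {x : Euc n} (hxR : R < ‖x‖) :
    lap (Phi n M R) x = (2 * M + 1) * (n - 1) / (2 * ‖x‖) := by
  have hx0 : 0 < ‖x‖ := hR.trans hxR
  rw [lap_Phi hn hR (norm_pos_iff.1 hx0) (hasDerivAt_phiD_of_gt hn hR hxR), phiD,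
    if_neg (not_le.2 hxR)]
  obtain ⟨k, rfl⟩ := Nat.exists_eq_add_one_of_ne_zero hn
  rw [Nat.add_sub_cancel]
  field_simp
  ring

theorem bilap_Phi_of_lt (hn : n ≠ 0) (hR : 0 < R) {x : Euc n} (hx : x ≠ 0) (hxR : ‖x‖ < R) :
    bilap (Phi n M R) x = -(M * (n - 1) * (n - 3)) / ‖x‖ ^ 3 := by
  have hlap : (fun y => lap (Phi n M R) y)
      =ᶠ[𝓝 x] fun y => (n - 1) / (2 * R) + M * (n - 1) / ‖y‖ := by
    filter_upwards [eventually_ne_nhds hx,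
      continuous_norm.continuousAt.eventually (eventually_lt_nhds hxR)]
      with y hy hyR using lap_Phi_of_lt hn hR hy hyR
  rw [bilap, hlap.lap_eq, lap_const_add_div_norm _ _ hx]

theorem bilap_Phi_of_gt (hn : n ≠ 0) (hR : 0 < R) {x : Euc n} (hxR : R < ‖x‖) :
    bilap (Phi n M R) x = -((M + 1 / 2) * (n - 1) * (n - 3)) / ‖x‖ ^ 3 := by
  have hlap : (fun y => lap (Phi n M R) y)
      =ᶠ[𝓝 x] fun y => 0 + (M + 1 / 2) * (n - 1) / ‖y‖ := by
    filter_upwards [continuous_norm.continuousAt.eventually (eventually_gt_nhds hxR)] with y hyR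
    rw [lap_Phi_of_gt hn hR hyR]
    field_simp
    ring
  rw [bilap, hlap.lap_eq, lap_const_add_div_norm _ _ (norm_pos_iff.1 (hR.trans hxR))]

theorem bilap_Phi_nonpos (hn : 3 ≤ n) (hM : 0 ≤ M) (hR : 0 < R) {x : Euc n} (hx : x ≠ 0)
    (hxR : ‖x‖ ≠ R) : bilap (Phi n M R) x ≤ 0 := by
  have hn3 : (3 : ℝ) ≤ n := by exact_mod_cast hn
  have hn0 : n ≠ 0 := by omega
  have hfactor : 0 ≤ ((n : ℝ) - 1) * (n - 3) := mul_nonneg (by linarith) (by linarith)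
  rcases hxR.lt_or_gt with hxR | hxR
  · rw [bilap_Phi_of_lt hn0 hR hx hxR, mul_assoc]
    exact div_nonpos_of_nonpos_of_nonneg (neg_nonpos.2 (mul_nonneg hM hfactor)) (by positivity)
  · rw [bilap_Phi_of_gt hn0 hR hxR, mul_assoc]
    exact div_nonpos_of_nonpos_of_nonneg (neg_nonpos.2 (mul_nonneg (by positivity) hfactor))
      (by positivity)

/-- **Computations (3.26)–(3.31) for the higher-dimensional Morawetz multiplier.**
For `n ≥ 4`, `M ≥ 0`, `R > 0`: (i) `M ≤ φ_R' ≤ M + 1/2` and `φ_R'` is continuous;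
(ii) `ΔΦ = (n-1)/(2R) + M(n-1)/|x|` for `0 < |x| < R`, and `(2M+1)(n-1)/(2|x|)` for
`|x| > R`; (iii) `Δ(ΔΦ) = -M(n-1)(n-3)/|x|³` for `0 < |x| < R`, and
`-(M+1/2)(n-1)(n-3)/|x|³` for `|x| > R`; in particular the bi-Laplacian is nonpositive
away from the origin and the sphere `{|x| = R}`. -/
theorem morawetz_multiplier_higher_dim (n : ℕ) (hn : 4 ≤ n) (M R : ℝ) (hM : 0 ≤ M)
    (hR : 0 < R) :
    (∀ r : ℝ, 0 ≤ r → M ≤ phiD n M R r ∧ phiD n M R r ≤ M + 1/2)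
    ∧ ContinuousOn (phiD n M R) (Set.Ici 0)
    ∧ (∀ x : Euc n, x ≠ 0 → ‖x‖ < R →
        lap (Phi n M R) x = ((n : ℝ) - 1) / (2 * R) + M * ((n : ℝ) - 1) / ‖x‖)
    ∧ (∀ x : Euc n, R < ‖x‖ →
        lap (Phi n M R) x = (2 * M + 1) * ((n : ℝ) - 1) / (2 * ‖x‖))
    ∧ (∀ x : Euc n, x ≠ 0 → ‖x‖ < R →
        bilap (Phi n M R) x = -(M * ((n : ℝ) - 1) * ((n : ℝ) - 3)) / ‖x‖ ^ 3)
    ∧ (∀ x : Euc n, R < ‖x‖ →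
        bilap (Phi n M R) x = -((M + 1/2) * ((n : ℝ) - 1) * ((n : ℝ) - 3)) / ‖x‖ ^ 3)
    ∧ (∀ x : Euc n, x ≠ 0 → ‖x‖ ≠ R → bilap (Phi n M R) x ≤ 0) := by
  have hn0 : n ≠ 0 := by omega
  exact ⟨fun r hr => phiD_mem_Icc hn0 hR hr, (continuous_phiD hn0 hR).continuousOn,
    fun x hx hxR => lap_Phi_of_lt hn0 hR hx hxR, fun x hxR => lap_Phi_of_gt hn0 hR hxR,
    fun x hx hxR => bilap_Phi_of_lt hn0 hR hx hxR, fun x hxR => bilap_Phi_of_gt hn0 hR hxR,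
    fun x hx hxR => bilap_Phi_nonpos (by omega) hM hR hx hxR⟩
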